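/- arXiv:2211.15355 — 3 statements merged into one kernel-verified Lean document; each statement's English description precedes it below -/
import Mathlib

section
/- Let S, W, A, M, Y be finite sets with a joint distribution P factorizing according to the causal graph s → w, (s,w) → a, (s,a) → m, (s,w,m) → y (i.e., P(s,w,a,m,y) = P(s)P(w|s)P(a|s,w)P(m|s,a)P(y|s,w,m), where m is independent of w given (s,a), and y is independent of a given (s,w,m)). Assume positivity: P(m,a|s,w) > 0 whenever P(s,w) > 0. Then the interventional distribution P(y,m|s,do(a)) := Σ_w P(w|s)P(m|s,a)P(y|s,w,m) satisfies the frontdoor-style identity P(y,m|s,do(a)) = P(m|s,a) · Σ_{a'} P(y|m,a',s)P(a'|s). -/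
open Finset

noncomputable section

variable {S W A M Y : Type*} [Fintype S] [Fintype W] [Fintype A] [Fintype M] [Fintype Y]

/-- The joint distribution `P(s,w,a,m,y) = P(s)P(w|s)P(a|s,w)P(m|s,a)P(y|s,w,m)`. -/
def Jnt (pS : S → ℝ) (pW : S → W → ℝ) (pA : S → W → A → ℝ) (pM : S → A → M → ℝ)
    (pY : S → W → M → Y → ℝ) (s : S) (w : W) (a : A) (m : M) (y : Y) : ℝ :=
  pS s * pW s w * pA s w a * pM s a m * pY s w m y

/-- The ordinary conditional `P(y | m, a, s)` of the joint distribution. -/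
def cY (pS : S → ℝ) (pW : S → W → ℝ) (pA : S → W → A → ℝ) (pM : S → A → M → ℝ)
    (pY : S → W → M → Y → ℝ) (s : S) (a : A) (m : M) (y : Y) : ℝ :=
  (∑ w, Jnt pS pW pA pM pY s w a m y) / (∑ w, ∑ y', Jnt pS pW pA pM pY s w a m y')

/-- The ordinary conditional `P(a | s)` of the joint distribution. -/
def cA (pS : S → ℝ) (pW : S → W → ℝ) (pA : S → W → A → ℝ) (pM : S → A → M → ℝ)
    (pY : S → W → M → Y → ℝ) (s : S) (a : A) : ℝ :=
  (∑ w, ∑ m, ∑ y, Jnt pS pW pA pM pY s w a m y) /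
    (∑ w, ∑ a', ∑ m, ∑ y, Jnt pS pW pA pM pY s w a' m y)

/-- The importance weight `d₁(s,m,a,y) = (Σ_{a'} P(y|m,a',s)P(a'|s)) / P(y|m,a,s)`. -/
def dwt (pS : S → ℝ) (pW : S → W → ℝ) (pA : S → W → A → ℝ) (pM : S → A → M → ℝ)
    (pY : S → W → M → Y → ℝ) (s : S) (m : M) (a : A) (y : Y) : ℝ :=
  (∑ a', cY pS pW pA pM pY s a' m y * cA pS pW pA pM pY s a') /
    cY pS pW pA pM pY s a m y

/-- Frontdoor-style identification: for every `s` in the support,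
`P(y,m|s,do(a)) := Σ_w P(w|s)P(m|s,a)P(y|s,w,m) = P(m|s,a) · Σ_{a'} P(y|m,a',s)P(a'|s)`. -/
theorem frontdoor_identity
    (pS : S → ℝ) (pW : S → W → ℝ) (pA : S → W → A → ℝ) (pM : S → A → M → ℝ)
    (pY : S → W → M → Y → ℝ)
    (hpS : ∀ s, 0 ≤ pS s) (hS : ∑ s, pS s = 1)
    (hpW : ∀ s w, 0 ≤ pW s w) (hW : ∀ s, ∑ w, pW s w = 1)
    (hpA : ∀ s w a, 0 ≤ pA s w a) (hA : ∀ s w, ∑ a, pA s w a = 1)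
    (hpM : ∀ s a m, 0 ≤ pM s a m) (hM : ∀ s a, ∑ m, pM s a m = 1)
    (hpY : ∀ s w m y, 0 ≤ pY s w m y) (hY : ∀ s w m, ∑ y, pY s w m y = 1)
    (hpos : ∀ s w a m, 0 < pS s * pW s w → 0 < pA s w a * pM s a m)
    :
    ∀ (s : S) (a : A) (m : M) (y : Y), 0 < pS s →
      (∑ w, pW s w * (pM s a m * pY s w m y))
        = pM s a m * ∑ a', cY pS pW pA pM pY s a' m y * cA pS pW pA pM pY s a' := by
  intro s a m y hs
  -- there is a w with pW s w > 0
  obtain ⟨w₀, -, hw₀⟩ := Finset.exists_lt_of_sum_lt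
    (s := Finset.univ) (f := fun _ : W => (0:ℝ)) (g := pW s) (by rw [hW s]; simp)
  -- key per-a' computation
  have key : ∀ a' : A, cY pS pW pA pM pY s a' m y * cA pS pW pA pM pY s a'
      = ∑ w, pW s w * pA s w a' * pY s w m y := by
    intro a'
    have hpApos : 0 < pA s w₀ a' := by
      have h := hpos s w₀ a' m (mul_pos hs hw₀)
      nlinarith [hpA s w₀ a', hpM s a' m]
    have hMpos : 0 < pM s a' m := by
      have h := hpos s w₀ a' m (mul_pos hs hw₀)
      nlinarith [hpA s w₀ a', hpM s a' m]
    set D : ℝ := ∑ w, pW s w * pA s w a' with hD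
    have hDpos : 0 < D := by
      have : ∀ w ∈ Finset.univ, 0 ≤ pW s w * pA s w a' := fun w _ =>
        mul_nonneg (hpW s w) (hpA s w a')
      have hterm : 0 < pW s w₀ * pA s w₀ a' := mul_pos hw₀ hpApos
      exact Finset.sum_pos' this ⟨w₀, Finset.mem_univ w₀, hterm⟩
    have hnum : (∑ w, Jnt pS pW pA pM pY s w a' m y)
        = pS s * pM s a' m * ∑ w, pW s w * pA s w a' * pY s w m y := by
      rw [Finset.mul_sum]
      exact Finset.sum_congr rfl fun w _ => by simp only [Jnt]; ring
    have hden : (∑ w, ∑ y', Jnt pS pW pA pM pY s w a' m y')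
        = pS s * pM s a' m * D := by
      rw [hD, Finset.mul_sum]
      refine Finset.sum_congr rfl fun w _ => ?_
      have : (∑ y', Jnt pS pW pA pM pY s w a' m y')
          = pS s * pW s w * pA s w a' * pM s a' m * (∑ y', pY s w m y') := by
        rw [Finset.mul_sum]; rfl
      rw [this, hY s w m]; ring
    have hAnum : (∑ w, ∑ m', ∑ y', Jnt pS pW pA pM pY s w a' m' y') = pS s * D := by
      rw [hD, Finset.mul_sum]
      refine Finset.sum_congr rfl fun w _ => ?_
      have : (∑ m', ∑ y', Jnt pS pW pA pM pY s w a' m' y')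
          = ∑ m', pS s * pW s w * pA s w a' * pM s a' m' := by
        refine Finset.sum_congr rfl fun m' _ => ?_
        have : (∑ y', Jnt pS pW pA pM pY s w a' m' y')
            = pS s * pW s w * pA s w a' * pM s a' m' * (∑ y', pY s w m' y') := by
          rw [Finset.mul_sum]; exact Finset.sum_congr rfl fun y' _ => rfl
        rw [this, hY s w m']; ring
      rw [this, ← Finset.mul_sum, hM s a']; ring
    have hAden : (∑ w, ∑ a'', ∑ m', ∑ y', Jnt pS pW pA pM pY s w a'' m' y') = pS s := by
      have : ∀ w, (∑ a'', ∑ m', ∑ y', Jnt pS pW pA pM pY s w a'' m' y')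
          = pS s * pW s w := by
        intro w
        have h1 : ∀ a'', (∑ m', ∑ y', Jnt pS pW pA pM pY s w a'' m' y')
            = pS s * pW s w * pA s w a'' := by
          intro a''
          have : (∑ m', ∑ y', Jnt pS pW pA pM pY s w a'' m' y')
              = ∑ m', pS s * pW s w * pA s w a'' * pM s a'' m' := by
            refine Finset.sum_congr rfl fun m' _ => ?_
            have : (∑ y', Jnt pS pW pA pM pY s w a'' m' y')
                = pS s * pW s w * pA s w a'' * pM s a'' m' * (∑ y', pY s w m' y') := by
              rw [Finset.mul_sum]; exact Finset.sum_congr rfl fun y' _ => rfl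
            rw [this, hY s w m']; ring
          rw [this, ← Finset.mul_sum, hM s a'']; ring
        calc (∑ a'', ∑ m', ∑ y', Jnt pS pW pA pM pY s w a'' m' y')
            = ∑ a'', pS s * pW s w * pA s w a'' := Finset.sum_congr rfl fun a'' _ => h1 a''
          _ = pS s * pW s w := by rw [← Finset.mul_sum, hA s w]; ring
      calc (∑ w, ∑ a'', ∑ m', ∑ y', Jnt pS pW pA pM pY s w a'' m' y')
          = ∑ w, pS s * pW s w := Finset.sum_congr rfl fun w _ => this w
        _ = pS s := by rw [← Finset.mul_sum, hW s]; ring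
    have hcY : cY pS pW pA pM pY s a' m y
        = (∑ w, pW s w * pA s w a' * pY s w m y) / D := by
      rw [cY, hnum, hden, mul_div_mul_left _ _ (by positivity)]
    have hcA : cA pS pW pA pM pY s a' = D := by
      rw [cA, hAnum, hAden, mul_comm, mul_div_assoc, div_self (ne_of_gt hs), mul_one]
    rw [hcY, hcA, div_mul_cancel₀ _ (ne_of_gt hDpos)]
  calc (∑ w, pW s w * (pM s a m * pY s w m y))
      = pM s a m * ∑ w, pW s w * pY s w m y := by
        rw [Finset.mul_sum]; exact Finset.sum_congr rfl fun w _ => by ring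
    _ = pM s a m * ∑ a', cY pS pW pA pM pY s a' m y * cA pS pW pA pM pY s a' := by
        congr 1
        rw [Finset.sum_congr rfl fun a' (_ : a' ∈ Finset.univ) => key a',
          Finset.sum_comm]
        refine Finset.sum_congr rfl fun w _ => Eq.symm ?_
        calc (∑ a', pW s w * pA s w a' * pY s w m y)
            = pW s w * pY s w m y * ∑ a', pA s w a' := by
              rw [Finset.mul_sum]; exact Finset.sum_congr rfl fun a' _ => by ring
          _ = pW s w * pY s w m y := by rw [hA s w]; ring

end
end

section
/- Let S, W, A, M, Y be finite sets with joint distribution P(s,w,a,m,y) = P(s)P(w|s)P(a|s,w)P(m|s,a)P(y|s,w,m), with positivity P(m,a|s,w) > 0 whenever P(s,w) > 0. Define the importance weight d(s,m,a,y) = (Σ_{a'} P(y|m,a',s)P(a'|s)) / P(y|m,a,s), and the interventional distribution P(y|s,do(a)) = Σ_w P(w|s)Σ_m P(m|s,a)P(y|s,w,m). Then for any bounded function f: S×A×Y → ℝ, E_{(s,a)~P}[ E_{y~P(·|s,do(a))}[f(s,a,y)] ] = E_{(s,a,m,y)~P}[ d(s,m,a,y) · f(s,a,y) ]. -/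
open Finset

noncomputable section

variable {S W A M Y : Type*} [Fintype S] [Fintype W] [Fintype A] [Fintype M] [Fintype Y]

/-- Proposition 1: the expected interventional loss equals the reweighted offline loss.
`E_{(s,a)~P}[ E_{y~P(·|s,do(a))}[f(s,a,y)] ] = E_{(s,a,m,y)~P}[ d(s,m,a,y)·f(s,a,y) ]`,
where `P(y|s,do(a)) = Σ_w P(w|s) Σ_m P(m|s,a) P(y|s,w,m)`. -/
theorem reweighting_unbiased
    (pS : S → ℝ) (pW : S → W → ℝ) (pA : S → W → A → ℝ) (pM : S → A → M → ℝ)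
    (pY : S → W → M → Y → ℝ)
    (hpS : ∀ s, 0 ≤ pS s) (hS : ∑ s, pS s = 1)
    (hpW : ∀ s w, 0 ≤ pW s w) (hW : ∀ s, ∑ w, pW s w = 1)
    (hpA : ∀ s w a, 0 ≤ pA s w a) (hA : ∀ s w, ∑ a, pA s w a = 1)
    (hpM : ∀ s a m, 0 ≤ pM s a m) (hM : ∀ s a, ∑ m, pM s a m = 1)
    (hpY : ∀ s w m y, 0 ≤ pY s w m y) (hY : ∀ s w m, ∑ y, pY s w m y = 1)
    (hpos : ∀ s w a m, 0 < pS s * pW s w → 0 < pA s w a * pM s a m)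
    (f : S → A → Y → ℝ) :
    (∑ s, ∑ a, (∑ w, ∑ m, ∑ y, Jnt pS pW pA pM pY s w a m y) *
        (∑ y, (∑ w, pW s w * ∑ m, pM s a m * pY s w m y) * f s a y))
      = ∑ s, ∑ w, ∑ a, ∑ m, ∑ y,
          Jnt pS pW pA pM pY s w a m y * (dwt pS pW pA pM pY s m a y * f s a y) := by
  apply Finset.sum_congr rfl
  intro s _
  by_cases hs : pS s = 0
  · simp [Jnt, hs]
  have hs' : 0 < pS s := (hpS s).lt_of_ne (Ne.symm hs)
  -- positivity facts
  obtain ⟨w0, -, hw0⟩ := Finset.exists_ne_zero_of_sum_ne_zero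
    (by rw [hW s]; norm_num : (∑ w, pW s w) ≠ 0)
  have hw0' : 0 < pW s w0 := (hpW s w0).lt_of_ne (Ne.symm hw0)
  obtain ⟨a0, -, ha0⟩ := Finset.exists_ne_zero_of_sum_ne_zero
    (by rw [hA s w0]; norm_num : (∑ a, pA s w0 a) ≠ 0)
  obtain ⟨m0, -, hm0⟩ := Finset.exists_ne_zero_of_sum_ne_zero
    (by rw [hM s a0]; norm_num : (∑ m, pM s a0 m) ≠ 0)
  have hApos : ∀ w a, 0 < pW s w → 0 < pA s w a := by
    intro w a hw
    have h1 := hpos s w a m0 (mul_pos hs' hw)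
    nlinarith [hpA s w a, hpM s a m0]
  have hMpos : ∀ a m, 0 < pM s a m := by
    intro a m
    have h1 := hpos s w0 a m (mul_pos hs' hw0')
    nlinarith [hpA s w0 a, hpM s a m]
  have hg : ∀ a, 0 < ∑ w, pW s w * pA s w a := by
    intro a
    exact Finset.sum_pos' (fun w _ => mul_nonneg (hpW s w) (hpA s w a))
      ⟨w0, Finset.mem_univ w0, mul_pos hw0' (hApos w0 a hw0')⟩
  -- key sum computations
  have L1 : ∀ a, (∑ w, ∑ m, ∑ y, Jnt pS pW pA pM pY s w a m y)
      = pS s * ∑ w, pW s w * pA s w a := by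
    intro a
    rw [Finset.mul_sum]
    refine Finset.sum_congr rfl fun w _ => ?_
    calc (∑ m, ∑ y, Jnt pS pW pA pM pY s w a m y)
        = ∑ m, pS s * pW s w * pA s w a * pM s a m * ∑ y, pY s w m y := by
          refine Finset.sum_congr rfl fun m _ => ?_
          rw [Finset.mul_sum]; rfl
      _ = (pS s * pW s w * pA s w a) * ∑ m, pM s a m := by
          rw [Finset.mul_sum]
          refine Finset.sum_congr rfl fun m _ => by rw [hY]; ring
      _ = pS s * (pW s w * pA s w a) := by rw [hM, mul_one]; ring
  have L2 : ∀ a m y, (∑ w, Jnt pS pW pA pM pY s w a m y)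
      = pS s * pM s a m * ∑ w, pW s w * pA s w a * pY s w m y := by
    intro a m y
    rw [Finset.mul_sum]
    refine Finset.sum_congr rfl fun w _ => ?_
    simp only [Jnt]; ring
  have L3 : ∀ a m, (∑ w, ∑ y', Jnt pS pW pA pM pY s w a m y')
      = pS s * pM s a m * ∑ w, pW s w * pA s w a := by
    intro a m
    rw [Finset.mul_sum]
    refine Finset.sum_congr rfl fun w _ => ?_
    calc (∑ y', Jnt pS pW pA pM pY s w a m y')
        = pS s * pW s w * pA s w a * pM s a m * ∑ y', pY s w m y' := by
          rw [Finset.mul_sum]; rfl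
      _ = _ := by rw [hY]; ring
  have cY_eq : ∀ a m y, cY pS pW pA pM pY s a m y
      = (∑ w, pW s w * pA s w a * pY s w m y) / (∑ w, pW s w * pA s w a) := by
    intro a m y
    rw [cY, L2, L3, mul_div_mul_left _ _ (ne_of_gt (mul_pos hs' (hMpos a m)))]
  have L4 : (∑ w, ∑ a', ∑ m, ∑ y, Jnt pS pW pA pM pY s w a' m y) = pS s := by
    calc (∑ w, ∑ a', ∑ m, ∑ y, Jnt pS pW pA pM pY s w a' m y)
        = ∑ a', ∑ w, ∑ m, ∑ y, Jnt pS pW pA pM pY s w a' m y := Finset.sum_comm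
      _ = ∑ a', pS s * ∑ w, pW s w * pA s w a' := by
          exact Finset.sum_congr rfl fun a' _ => L1 a'
      _ = pS s * ∑ w, pW s w * ∑ a', pA s w a' := by
          simp only [Finset.mul_sum]
          rw [Finset.sum_comm]
      _ = pS s := by
          have : ∀ w, pW s w * ∑ a', pA s w a' = pW s w := fun w => by rw [hA, mul_one]
          simp only [this, hW, mul_one]
  have cA_eq : ∀ a, cA pS pW pA pM pY s a = ∑ w, pW s w * pA s w a := by
    intro a
    rw [cA, L1, L4, mul_comm, mul_div_assoc, div_self hs, mul_one]
  have hk : ∀ m y, (∑ a', ∑ w, pW s w * pA s w a' * pY s w m y)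
      = ∑ w, pW s w * pY s w m y := by
    intro m y
    rw [Finset.sum_comm]
    refine Finset.sum_congr rfl fun w _ => ?_
    calc (∑ a', pW s w * pA s w a' * pY s w m y)
        = pW s w * pY s w m y * ∑ a', pA s w a' := by
          rw [Finset.mul_sum]
          exact Finset.sum_congr rfl fun a' _ => by ring
      _ = _ := by rw [hA, mul_one]
  have dnum : ∀ m y, (∑ a', cY pS pW pA pM pY s a' m y * cA pS pW pA pM pY s a')
      = ∑ w, pW s w * pY s w m y := by
    intro m y
    rw [← hk m y]
    refine Finset.sum_congr rfl fun a' _ => ?_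
    rw [cY_eq, cA_eq, div_mul_cancel₀ _ (ne_of_gt (hg a'))]
  have hkzero : ∀ a m y, (∑ w, pW s w * pA s w a * pY s w m y) = 0 →
      (∑ w, pW s w * pY s w m y) = 0 := by
    intro a m y hh
    have hterm := (Finset.sum_eq_zero_iff_of_nonneg
      (fun w _ => mul_nonneg (mul_nonneg (hpW s w) (hpA s w a)) (hpY s w m y))).1 hh
    refine Finset.sum_eq_zero fun w _ => ?_
    by_cases hw : pW s w = 0
    · rw [hw, zero_mul]
    · have hw' : 0 < pW s w := (hpW s w).lt_of_ne (Ne.symm hw)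
      have hA' : pA s w a ≠ 0 := ne_of_gt (hApos w a hw')
      have := hterm w (Finset.mem_univ w)
      have hy : pY s w m y = 0 :=
        (mul_eq_zero.1 this).resolve_left (mul_ne_zero hw hA')
      rw [hy, mul_zero]
  -- main computation
  rw [Finset.sum_comm]
  refine Finset.sum_congr rfl fun a _ => ?_
  have lhsrw : (∑ w, ∑ m, ∑ y, Jnt pS pW pA pM pY s w a m y) *
        (∑ y, (∑ w, pW s w * ∑ m, pM s a m * pY s w m y) * f s a y)
      = ∑ m, ∑ y, pS s * pM s a m * (∑ w, pW s w * pY s w m y) *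
          (∑ w, pW s w * pA s w a) * f s a y := by
    have swap1 : ∀ y, (∑ w, pW s w * ∑ m, pM s a m * pY s w m y)
        = ∑ m, pM s a m * ∑ w, pW s w * pY s w m y := by
      intro y
      simp only [Finset.mul_sum]
      rw [Finset.sum_comm]
      exact Finset.sum_congr rfl fun m _ =>
        Finset.sum_congr rfl fun w _ => by ring
    rw [L1]
    simp only [swap1]
    calc (pS s * ∑ w, pW s w * pA s w a) *
          ∑ y, (∑ m, pM s a m * ∑ w, pW s w * pY s w m y) * f s a y
        = ∑ y, ∑ m, pS s * pM s a m * (∑ w, pW s w * pY s w m y) *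
            (∑ w, pW s w * pA s w a) * f s a y := by
          rw [Finset.mul_sum]
          refine Finset.sum_congr rfl fun y _ => ?_
          rw [Finset.sum_mul, Finset.mul_sum]
          exact Finset.sum_congr rfl fun m _ => by ring
      _ = _ := Finset.sum_comm
  have rhsrw : (∑ w, ∑ m, ∑ y, Jnt pS pW pA pM pY s w a m y *
          (dwt pS pW pA pM pY s m a y * f s a y))
      = ∑ m, ∑ y, pS s * pM s a m * (∑ w, pW s w * pY s w m y) *
          (∑ w, pW s w * pA s w a) * f s a y := by
    calc (∑ w, ∑ m, ∑ y, Jnt pS pW pA pM pY s w a m y *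
            (dwt pS pW pA pM pY s m a y * f s a y))
        = ∑ m, ∑ y, ∑ w, Jnt pS pW pA pM pY s w a m y *
            (dwt pS pW pA pM pY s m a y * f s a y) := by
          rw [Finset.sum_comm]
          exact Finset.sum_congr rfl fun m _ => Finset.sum_comm
      _ = _ := by
          refine Finset.sum_congr rfl fun m _ => Finset.sum_congr rfl fun y _ => ?_
          rw [← Finset.sum_mul, L2]
          rw [dwt, dnum, cY_eq]
          by_cases hh : (∑ w, pW s w * pA s w a * pY s w m y) = 0
          · rw [hh, hkzero a m y hh]
            simp
          · rw [div_div_eq_mul_div]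
            field_simp
  rw [lhsrw, rhsrw]


end
end

section
/- Let S, U, A, Y be finite sets with joint distribution P(s,u,a,y) = P(s)P(u|s)P(a|s,u)P(y|s,u,a), with positivity P(a|s,u) > 0 whenever P(s,u) > 0. Define the backdoor-adjusted (interventional) distribution P(y|s,do(a)) = Σ_u P(u|s)P(y|s,u,a). Then for any bounded f: S×A×Y → ℝ, E_{(s,a)~P}[ E_{y~P(·|s,do(a))}[f(s,a,y)] ] = E_{(s,a,u,y)~P}[ (P(u|s)/P(u|s,a)) · f(s,a,y) ]. -/
/-!
Since `P(u|s,a) = P(s,u,a) / P(s,a)`, the weight `P(u|s) / P(u|s,a)` cancels the factor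
`P(s,u,a)` of the joint density and leaves `P(s,a) P(u|s) P(y|s,u,a)`; summing this over `u`
gives `P(s,a) P(y|s,do(a))`. Where `P(s,u,a) = 0` the weight is a junk value, but positivity
then forces `P(s) P(u|s) = 0`, so both sides vanish there.
-/

open Finset

noncomputable section

variable {S U A Y : Type*} [Fintype S] [Fintype U] [Fintype A] [Fintype Y]

/-- The joint distribution `P(s,u,a,y) = P(s)P(u|s)P(a|s,u)P(y|s,u,a)`. -/
def Jb (pS : S → ℝ) (pU : S → U → ℝ) (pA : S → U → A → ℝ) (pY : S → U → A → Y → ℝ)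
    (s : S) (u : U) (a : A) (y : Y) : ℝ :=
  pS s * pU s u * pA s u a * pY s u a y

/-- The ordinary conditional `P(u | s, a)` of the joint distribution. -/
def cU (pS : S → ℝ) (pU : S → U → ℝ) (pA : S → U → A → ℝ) (pY : S → U → A → Y → ℝ)
    (s : S) (u : U) (a : A) : ℝ :=
  (∑ y, Jb pS pU pA pY s u a y) / (∑ u', ∑ y, Jb pS pU pA pY s u' a y)

end

/-- Also true for `d = 0`, through `x / 0 = 0`. -/
theorem mul_div_div_eq_of_eq_zero_imp {K : Type*} [Field K] {n d x : K}
    (h : n = 0 → d * x = 0) : n * (x / (n / d)) = d * x := by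
  rcases eq_or_ne n 0 with hn | hn
  · rw [hn, h hn, zero_mul]
  · rw [mul_div_assoc', div_div_eq_mul_div, mul_assoc, mul_div_cancel_left₀ _ hn, mul_comm]

theorem eq_zero_of_mul_eq_zero_of_pos_imp {R : Type*} [MulZeroClass R] [PartialOrder R]
    [PosMulStrictMono R] {x y : R} (hx : 0 ≤ x) (hy : 0 < x → 0 < y) (h : x * y = 0) :
    x = 0 :=
  hx.eq_or_lt.elim Eq.symm fun hlt => absurd h (mul_pos hlt (hy hlt)).ne'

section

variable {S U A Y : Type*}

/-- The marginal `P(s, a)`. -/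
noncomputable def pSA [Fintype U] (pS : S → ℝ) (pU : S → U → ℝ) (pA : S → U → A → ℝ)
    (s : S) (a : A) : ℝ :=
  ∑ u, pS s * pU s u * pA s u a

variable {pS : S → ℝ} {pU : S → U → ℝ} {pA : S → U → A → ℝ} {pY : S → U → A → Y → ℝ}

theorem sum_Jb_eq [Fintype Y] (hY : ∀ s u a, ∑ y, pY s u a y = 1) (s : S) (u : U) (a : A) :
    ∑ y, Jb pS pU pA pY s u a y = pS s * pU s u * pA s u a := by
  simp only [Jb, ← mul_sum, hY, mul_one]

theorem sum_sum_Jb_eq [Fintype U] [Fintype Y] (hY : ∀ s u a, ∑ y, pY s u a y = 1)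
    (s : S) (a : A) :
    ∑ u, ∑ y, Jb pS pU pA pY s u a y = pSA pS pU pA s a := by
  simp only [sum_Jb_eq hY, pSA]

theorem cU_eq [Fintype U] [Fintype Y] (hY : ∀ s u a, ∑ y, pY s u a y = 1)
    (s : S) (u : U) (a : A) :
    cU pS pU pA pY s u a = pS s * pU s u * pA s u a / pSA pS pU pA s a := by
  rw [cU, sum_Jb_eq hY, sum_sum_Jb_eq hY]

theorem pSA_mul_eq_zero_of_mul_eq_zero [Fintype U] {s : S} {u : U} (a : A)
    (h : pS s * pU s u = 0) :
    pSA pS pU pA s a * pU s u = 0 := by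
  simp only [pSA, sum_mul]
  exact sum_eq_zero fun u' _ => by linear_combination pU s u' * pA s u' a * h

theorem Jb_mul_div_cU [Fintype U] [Fintype Y] (hpS : ∀ s, 0 ≤ pS s) (hpU : ∀ s u, 0 ≤ pU s u)
    (hY : ∀ s u a, ∑ y, pY s u a y = 1) (hpos : ∀ s u a, 0 < pS s * pU s u → 0 < pA s u a)
    (s : S) (u : U) (a : A) (y : Y) :
    Jb pS pU pA pY s u a y * (pU s u / cU pS pU pA pY s u a)
      = pSA pS pU pA s a * pU s u * pY s u a y := by
  have hweight : pS s * pU s u * pA s u a * (pU s u / cU pS pU pA pY s u a)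
      = pSA pS pU pA s a * pU s u := by
    rw [cU_eq hY]
    exact mul_div_div_eq_of_eq_zero_imp fun h => pSA_mul_eq_zero_of_mul_eq_zero a
      (eq_zero_of_mul_eq_zero_of_pos_imp (mul_nonneg (hpS s) (hpU s u)) (hpos s u a) h)
  rw [Jb, mul_right_comm, hweight]

end

variable {S U A Y : Type*} [Fintype S] [Fintype U] [Fintype A] [Fintype Y]

theorem backdoor_reweighting_unbiased_general
    (pS : S → ℝ) (pU : S → U → ℝ) (pA : S → U → A → ℝ) (pY : S → U → A → Y → ℝ)
    (hpS : ∀ s, 0 ≤ pS s)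
    (hpU : ∀ s u, 0 ≤ pU s u)
    (hY : ∀ s u a, ∑ y, pY s u a y = 1)
    (hpos : ∀ s u a, 0 < pS s * pU s u → 0 < pA s u a)
    (f : S → A → Y → ℝ) :
    (∑ s, ∑ a, (∑ u, ∑ y, Jb pS pU pA pY s u a y) *
        (∑ y, (∑ u, pU s u * pY s u a y) * f s a y))
      = ∑ s, ∑ u, ∑ a, ∑ y,
          Jb pS pU pA pY s u a y * ((pU s u / cU pS pU pA pY s u a) * f s a y) := by
  simp_rw [← mul_assoc, Jb_mul_div_cU hpS hpU hY hpos, sum_sum_Jb_eq hY, sum_mul, mul_sum]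
  refine sum_congr rfl fun s _ => ?_
  rw [sum_comm_cycle]
  simp only [mul_assoc]

/-- Proposition 3 (backdoor reweighting): with `P(y|s,do(a)) = Σ_u P(u|s)P(y|s,u,a)`,
`E_{(s,a)~P}[ E_{y~P(·|s,do(a))}[f] ] = E_{(s,a,u,y)~P}[ (P(u|s)/P(u|s,a)) · f ]`. -/
theorem backdoor_reweighting_unbiased
    (pS : S → ℝ) (pU : S → U → ℝ) (pA : S → U → A → ℝ) (pY : S → U → A → Y → ℝ)
    (hpS : ∀ s, 0 ≤ pS s) (hS : ∑ s, pS s = 1)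
    (hpU : ∀ s u, 0 ≤ pU s u) (hU : ∀ s, ∑ u, pU s u = 1)
    (hpA : ∀ s u a, 0 ≤ pA s u a) (hA : ∀ s u, ∑ a, pA s u a = 1)
    (hpY : ∀ s u a y, 0 ≤ pY s u a y) (hY : ∀ s u a, ∑ y, pY s u a y = 1)
    (hpos : ∀ s u a, 0 < pS s * pU s u → 0 < pA s u a)
    (f : S → A → Y → ℝ) :
    (∑ s, ∑ a, (∑ u, ∑ y, Jb pS pU pA pY s u a y) *
        (∑ y, (∑ u, pU s u * pY s u a y) * f s a y))
      = ∑ s, ∑ u, ∑ a, ∑ y,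
          Jb pS pU pA pY s u a y * ((pU s u / cU pS pU pA pY s u a) * f s a y) :=
  backdoor_reweighting_unbiased_general pS pU pA pY hpS hpU hY hpos f
end
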